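/- For every integer κ ≥ 1, H_q(κ) ⊆ H_q(0); that is, every point of T^{−q}(Q^{κ−1}) \ ⋃_{i=0}^{q−1} T^{−i}(Q^κ) lies in ⋂_{i=0}^{q−1} T^{−i}(Bᶜ) ∩ T^{−q}(B). -/
import Mathlib


open Set MeasureTheory

/-- `U⁰ = B` and `U^{κ+1} = U^κ \ (U^κ ∩ ⋂_{i=1}^q T^{−i}((U^κ)ᶜ))`. -/
def Uset {Ω : Type*} (T : Ω → Ω) (B : Set Ω) (q : ℕ) : ℕ → Set Ω
  | 0 => B
  | κ + 1 =>
      Uset T B q κ \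
        (Uset T B q κ ∩ ⋂ i ∈ Finset.Icc 1 q, T^[i] ⁻¹' (Uset T B q κ)ᶜ)

/-- `Q^κ = U^κ ∩ ⋂_{i=1}^q T^{−i}((U^κ)ᶜ)`. -/
def Qset {Ω : Type*} (T : Ω → Ω) (B : Set Ω) (q : ℕ) (κ : ℕ) : Set Ω :=
  Uset T B q κ ∩ ⋂ i ∈ Finset.Icc 1 q, T^[i] ⁻¹' (Uset T B q κ)ᶜ

/-- `U^∞ = ⋂_{κ ≥ 0} U^κ`. -/
def Uinf {Ω : Type*} (T : Ω → Ω) (B : Set Ω) (q : ℕ) : Set Ω :=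
  ⋂ κ, Uset T B q κ

/-- `W_m = ⋂_{i=0}^{m-1} T^{−i}(Bᶜ)`. -/
def Wset {Ω : Type*} (T : Ω → Ω) (B : Set Ω) (m : ℕ) : Set Ω :=
  ⋂ i ∈ Finset.range m, T^[i] ⁻¹' Bᶜ

/-- `H_q(0) = W_q \ W_{q+1}` and, for `κ ≥ 1`,
`H_q(κ) = T^{−q}(Q^{κ−1}) \ ⋃_{i=0}^{q−1} T^{−i}(Q^κ)`. -/
def Hset {Ω : Type*} (T : Ω → Ω) (B : Set Ω) (q : ℕ) : ℕ → Set Ω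
  | 0 => Wset T B q \ Wset T B (q + 1)
  | κ + 1 =>
      T^[q] ⁻¹' Qset T B q κ \ ⋃ i ∈ Finset.range q, T^[i] ⁻¹' Qset T B q (κ + 1)

lemma mem_Qset_iff {Ω : Type*} (T : Ω → Ω) (B : Set Ω) (q κ : ℕ) (x : Ω) :
    x ∈ Qset T B q κ ↔
      x ∈ Uset T B q κ ∧ ∀ j, 1 ≤ j → j ≤ q → T^[j] x ∉ Uset T B q κ := by
  simp [Qset, Finset.mem_Icc]

lemma mem_Uset_succ {Ω : Type*} (T : Ω → Ω) (B : Set Ω) (q κ : ℕ) (x : Ω) :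
    x ∈ Uset T B q (κ + 1) ↔ x ∈ Uset T B q κ ∧ x ∉ Qset T B q κ := by
  show x ∈ _ \ _ ↔ _
  rw [Set.mem_diff]
  rfl

lemma Uset_succ_subset {Ω : Type*} (T : Ω → Ω) (B : Set Ω) (q κ : ℕ) :
    Uset T B q (κ + 1) ⊆ Uset T B q κ :=
  fun _ hx => ((mem_Uset_succ T B q κ _).mp hx).1

lemma Uset_subset_B {Ω : Type*} (T : Ω → Ω) (B : Set Ω) (q : ℕ) :
    ∀ κ, Uset T B q κ ⊆ B
  | 0 => le_refl _
  | κ + 1 => (Uset_succ_subset T B q κ).trans (Uset_subset_B T B q κ)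

lemma core_lemma {Ω : Type*} (T : Ω → Ω) (B : Set Ω) (q : ℕ) (hq : 1 ≤ q) (m : ℕ) (x : Ω)
    (hq1 : T^[q] x ∈ Qset T B q m)
    (h2 : ∀ i, i < q → T^[i] x ∉ Qset T B q (m + 1)) :
    (∀ i, i < q → T^[i] x ∉ B) ∧ T^[q] x ∈ B := by
  have hqB : T^[q] x ∈ B := Uset_subset_B T B q m hq1.1
  -- step: if T^[i] x ∈ B for i < q then T^[i] x ∈ U^{m+1}
  have step : ∀ i, i < q → T^[i] x ∈ B → T^[i] x ∈ Uset T B q (m + 1) := by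
    intro i hi hB
    have key : ∀ lam, lam ≤ m + 1 → T^[i] x ∈ Uset T B q lam := by
      intro lam
      induction lam with
      | zero => intro _; exact hB
      | succ lam ih =>
        intro hlam
        have hU : T^[i] x ∈ Uset T B q lam := ih (by omega)
        rw [mem_Uset_succ]
        refine ⟨hU, ?_⟩
        rw [mem_Qset_iff]
        push_neg
        intro _
        refine ⟨q - i, by omega, by omega, ?_⟩
        have heq : T^[q - i] (T^[i] x) = T^[q] x := by
          rw [← Function.iterate_add_apply]
          congr 1
          omega
        rw [heq]
        -- T^[q] x ∈ U^m ⊆ U^lam since lam ≤ m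
        have hmono : ∀ a b, a ≤ b → Uset T B q b ⊆ Uset T B q a := by
          intro a b hab
          induction hab with
          | refl => exact le_refl _
          | step _ ih2 => exact (Uset_succ_subset T B q _).trans ih2
        exact hmono lam m (by omega) hq1.1
    exact key (m + 1) le_rfl
  have hmono : ∀ a b, a ≤ b → Uset T B q b ⊆ Uset T B q a := by
    intro a b hab
    induction hab with
    | refl => exact le_refl _
    | step _ ih2 => exact (Uset_succ_subset T B q _).trans ih2
  have main : ∀ k, ∀ i, i < q → q - i ≤ k → T^[i] x ∉ B := by
    intro k
    induction k with
    | zero => intro i hi hk; omega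
    | succ k ih =>
      intro i hi hk hB
      have hU : T^[i] x ∈ Uset T B q (m + 1) := step i hi hB
      have hnQ := h2 i hi
      rw [mem_Qset_iff] at hnQ
      push_neg at hnQ
      obtain ⟨j, hj1, hjq, hjU⟩ := hnQ hU
      have hjU' : T^[i + j] x ∈ Uset T B q (m + 1) := by
        have : T^[j] (T^[i] x) = T^[i + j] x := by
          rw [← Function.iterate_add_apply]; congr 1; omega
        rwa [this] at hjU
      rcases lt_trichotomy (i + j) q with h | h | h
      · exact ih (i + j) h (by omega) (Uset_subset_B T B q (m + 1) hjU')
      · have hnot : T^[q] x ∉ Uset T B q (m + 1) := by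
          rw [mem_Uset_succ]
          intro hc
          exact hc.2 hq1
        rw [h] at hjU'
        exact hnot hjU'
      · have hin := (mem_Qset_iff T B q m _).mp hq1
        refine hin.2 (i + j - q) (by omega) (by omega) ?_
        have heq : T^[i + j - q] (T^[q] x) = T^[i + j] x := by
          rw [← Function.iterate_add_apply]; congr 1; omega
        rw [heq]
        exact hmono m (m + 1) (by omega) hjU'
  exact ⟨fun i hi => main q i hi (by omega), hqB⟩

theorem Hset_subset_Hset_zero {Ω : Type*} (T : Ω → Ω) (B : Set Ω) (q : ℕ) (hq : 1 ≤ q)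
    (κ : ℕ) (hκ : 1 ≤ κ) :
    Hset T B q κ ⊆ Hset T B q 0 ∧
    T^[q] ⁻¹' Qset T B q (κ - 1) \ ⋃ i ∈ Finset.range q, T^[i] ⁻¹' Qset T B q κ ⊆
      (⋂ i ∈ Finset.range q, T^[i] ⁻¹' Bᶜ) ∩ T^[q] ⁻¹' B := by
  obtain ⟨m, rfl⟩ : ∃ m, κ = m + 1 := ⟨κ - 1, by omega⟩
  have hcore : ∀ x, x ∈ T^[q] ⁻¹' Qset T B q m \
      ⋃ i ∈ Finset.range q, T^[i] ⁻¹' Qset T B q (m + 1) →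
      (∀ i, i < q → T^[i] x ∉ B) ∧ T^[q] x ∈ B := by
    intro x hx
    refine core_lemma T B q hq m x hx.1 ?_
    intro i hi hQ
    exact hx.2 (by simp only [Set.mem_iUnion]; exact ⟨i, Finset.mem_range.mpr hi, hQ⟩)
  constructor
  · intro x hx
    have h := hcore x hx
    show x ∈ Wset T B q \ Wset T B (q + 1)
    constructor
    · simp only [Wset, Set.mem_iInter, Finset.mem_range]
      intro i hi
      exact h.1 i hi
    · simp only [Wset, Set.mem_iInter, Finset.mem_range]
      push_neg
      exact ⟨q, by omega, by simpa using h.2⟩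
  · intro x hx
    have h := hcore x (by simpa using hx)
    constructor
    · simp only [Set.mem_iInter, Finset.mem_range]
      intro i hi
      exact h.1 i hi
    · exact h.2
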